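/- Let V be a Gel'fand–Dorfman bialgebra over ℂ, let n > 3 be a natural number, and let d^0,…,d^n be linear maps from V into the space of polynomial maps ℂ → V (write d^i_λ(a) ∈ V for the value at λ ∈ ℂ) satisfying the conformal derivation equation (E). Then d^n_λ(b)∘a = 0 and a∘d^n_λ(b) = 0 for all a, b ∈ V and all λ ∈ ℂ. -/

import Mathlib

/-!
Only the top-degree part of (E) is needed. Substitute `m = μt`, `x = t` and apply a linear
functional: every summand becomes `(α + βt)^i (c_i + e_i t)`, whose coefficient of `t^(n+1)`
vanishes unless `i = n`. Comparing these coefficients gives, for all `μ`, with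
`D = d^n_λ(a)` and `E = d^n_λ(b)`,
`(1+μ) d^n_λ(b∘a) + μ d^n_λ(a∘b)`
`  = (-μ)^n (b∘D + μ (D∘b + b∘D)) + (μ+1)^n (E∘a + μ (E∘a + a∘E))`.
Since `n > 3`, the coefficients of `μ^2` and `μ^3` see only the last term:
`C(n,2) E∘a + n (E∘a + a∘E) = 0` and `C(n,3) E∘a + C(n,2) (E∘a + a∘E) = 0`,
a linear system with determinant `C(n,2) n (n+1) / 6 ≠ 0`.
-/

/-- The conformal derivation equation (E) for a family `d^0, …, d^n` of linear maps
from `V` into maps `ℂ → V`, on the quadratic Lie conformal algebra of the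
Gel'fand–Dorfman bialgebra `(V, circ, br)`; the formal variable `∂` is evaluated
at `x : ℂ`. -/
def ConfDerEq {V : Type*} [AddCommGroup V] [Module ℂ V]
    (circ br : V →ₗ[ℂ] V →ₗ[ℂ] V) (n : ℕ) (d : ℕ → V →ₗ[ℂ] (ℂ → V)) : Prop :=
  ∀ (a b : V) (l m x : ℂ),
    (x + l) • (∑ i ∈ Finset.range (n + 1), x ^ i • d i (circ b a) l)
      + m • (∑ i ∈ Finset.range (n + 1), x ^ i • d i (circ a b + circ b a) l)
      + (∑ i ∈ Finset.range (n + 1), x ^ i • d i (br b a) l)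
    = (∑ i ∈ Finset.range (n + 1), (-l - m) ^ i •
        (x • circ b (d i a l) + (l + m) • (circ (d i a l) b + circ b (d i a l))
          + br b (d i a l)))
      + (∑ i ∈ Finset.range (n + 1), (m + x) ^ i •
        (x • circ (d i b l) a + m • (circ (d i b l) a + circ a (d i b l))
          + br (d i b l) a))

open Finset Polynomial

section Polynomial

variable {R : Type*} [CommRing R]

noncomputable def affinePowPoly (a b : R) (c e : ℕ → R) (n : ℕ) : R[X] :=
  ∑ i ∈ range (n + 1), (C a + C b * X) ^ i * (C (c i) + C (e i) * X)

theorem natDegree_affine_pow_mul_le (a b c e : R) (i : ℕ) :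
    ((C a + C b * X) ^ i * (C c + C e * X)).natDegree ≤ i + 1 := by
  compute_degree

theorem coeff_affine_pow_mul (a b c e : R) (i : ℕ) :
    ((C a + C b * X) ^ i * (C c + C e * X)).coeff (i + 1) = b ^ i * e := by
  have hlin : (C a + C b * X).natDegree ≤ 1 := by compute_degree
  have hdeg : ((C a + C b * X) ^ i).natDegree ≤ i := by
    simpa using natDegree_pow_le_of_le i hlin
  have hpow := coeff_pow_of_natDegree_le (m := i) hlin
  rw [mul_one] at hpow
  rw [coeff_mul_add_eq_of_natDegree_le hdeg (by compute_degree), hpow]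
  simp

theorem coeff_affinePowPoly (a b : R) (c e : ℕ → R) (n : ℕ) :
    (affinePowPoly a b c e n).coeff (n + 1) = b ^ n * e n := by
  rw [affinePowPoly, sum_range_succ, coeff_add, finsetSum_coeff,
    sum_eq_zero fun i hi => coeff_eq_zero_of_natDegree_lt
      ((natDegree_affine_pow_mul_le _ _ _ _ i).trans_lt (by simpa using hi)), zero_add,
    coeff_affine_pow_mul]

end Polynomial

section VectorValued

variable {K V : Type*} [Field K] [AddCommGroup V] [Module K V]

noncomputable def affinePowSum (a b : K) (c e : ℕ → V) (n : ℕ) (t : K) : V :=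
  ∑ i ∈ range (n + 1), (a + b * t) ^ i • (c i + t • e i)

theorem Module.Dual.apply_affinePowSum (f : Module.Dual K V) (a b : K) (c e : ℕ → V) (n : ℕ)
    (t : K) : f (affinePowSum a b c e n t)
      = (affinePowPoly a b (fun i => f (c i)) (fun i => f (e i)) n).eval t := by
  simp only [affinePowSum, affinePowPoly, map_sum, map_smul, map_add, smul_eq_mul,
    eval_finsetSum, eval_mul, eval_pow, eval_add, eval_C, eval_X, mul_comm t]

theorem top_smul_eq_of_affinePowSum_eq [Infinite K] {n : ℕ} {a₁ b₁ a₂ b₂ a₃ b₃ : K}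
    {c₁ e₁ c₂ e₂ c₃ e₃ : ℕ → V}
    (h : ∀ t, affinePowSum a₁ b₁ c₁ e₁ n t
      = affinePowSum a₂ b₂ c₂ e₂ n t + affinePowSum a₃ b₃ c₃ e₃ n t) :
    b₁ ^ n • e₁ n = b₂ ^ n • e₂ n + b₃ ^ n • e₃ n := by
  rw [← sub_eq_zero, ← Module.forall_dual_apply_eq_zero_iff K]
  intro f
  have hpoly : affinePowPoly a₁ b₁ (fun i => f (c₁ i)) (fun i => f (e₁ i)) n
      = affinePowPoly a₂ b₂ (fun i => f (c₂ i)) (fun i => f (e₂ i)) n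
        + affinePowPoly a₃ b₃ (fun i => f (c₃ i)) (fun i => f (e₃ i)) n :=
    Polynomial.funext fun t => by
      simpa only [eval_add, ← Module.Dual.apply_affinePowSum, map_add] using congrArg f (h t)
  have hcoeff := congrArg (coeff · (n + 1)) hpoly
  simp only [coeff_add, coeff_affinePowPoly] at hcoeff
  simp only [map_sub, map_add, map_smul, smul_eq_mul, hcoeff, sub_self]

theorem choose_smul_add_choose_smul_eq_zero [Infinite K] {α β γ δ u w : V} {n : ℕ}
    (h : ∀ μ : K, α + μ • β = μ ^ n • (γ + μ • δ) + (μ + 1) ^ n • (u + μ • w))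
    {j : ℕ} (hjn : j + 2 < n) :
    (n.choose (j + 2) : K) • u + (n.choose (j + 1) : K) • w = 0 := by
  rw [← Module.forall_dual_apply_eq_zero_iff K]
  intro f
  have hpoly : C (f α) + C (f β) * X
      = X ^ n * (C (f γ) + C (f δ) * X) + (X + 1) ^ n * (C (f u) + C (f w) * X) :=
    Polynomial.funext fun μ => by
      have hμ := congrArg f (h μ)
      simp only [map_add, map_smul, smul_eq_mul] at hμ
      simp only [eval_add, eval_mul, eval_C, eval_X, eval_pow, eval_one]
      linear_combination hμ
  have hcoeff := congrArg (coeff · (j + 2)) hpoly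
  simp only [coeff_add, coeff_C, mul_add, ← mul_assoc, coeff_mul_C, coeff_mul_X,
    coeff_X_add_one_pow, coeff_X_pow, Nat.add_eq_zero_iff, OfNat.ofNat_ne_zero, one_ne_zero,
    and_false, if_false] at hcoeff
  rw [if_neg (by omega), if_neg (by omega)] at hcoeff
  simp only [map_add, map_smul, smul_eq_mul]
  linear_combination -hcoeff

theorem eq_zero_of_choose_smul_add_choose_smul [CharZero K] {u w : V} {n : ℕ}
    (hn : 2 ≤ n)
    (h₁ : (n.choose 2 : K) • u + (n.choose 1 : K) • w = 0)
    (h₂ : (n.choose 3 : K) • u + (n.choose 2 : K) • w = 0) : u = 0 ∧ w = 0 := by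
  have hdet : ((n.choose 2 * n * (n + 1) : ℕ) : K)
      = 6 * ((n.choose 2 : K) ^ 2 - n.choose 1 * n.choose 3) := by
    obtain ⟨m, rfl⟩ : ∃ m, n = m + 2 := ⟨n - 2, by omega⟩
    have h2 : ((m + 2).choose 2 : K) * 2 = (m + 2) * (m + 1) := by
      rw [Nat.cast_choose_two]
      push_cast
      ring
    have h3 : ((m + 2).choose 3 : K) * 3 = (m + 2).choose 2 * m := by
      exact_mod_cast Nat.choose_succ_right_eq (m + 2) 2
    rw [Nat.choose_one_right]
    push_cast
    linear_combination 2 * ((m : K) + 2) * h3 - (3 * (m + 2).choose 2 : K) * h2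
  have hu : u = 0 := by
    have hdet_smul : ((n.choose 2 * n * (n + 1) : ℕ) : K) • u = 0 := by
      rw [hdet]
      linear_combination (norm := module)
        (6 * n.choose 2 : K) • h₁ - (6 * n.choose 1 : K) • h₂
    refine (smul_eq_zero.1 hdet_smul).resolve_left (Nat.cast_ne_zero.2 ?_)
    have := Nat.choose_pos hn
    positivity
  exact ⟨hu, by simpa [hu, show n ≠ 0 by omega] using h₁⟩

theorem eq_zero_of_forall_add_smul_eq [CharZero K] {α β γ δ u w : V} {n : ℕ} (hn : 3 < n)
    (h : ∀ μ : K, α + μ • β = μ ^ n • (γ + μ • δ) + (μ + 1) ^ n • (u + μ • w)) :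
    u = 0 ∧ w = 0 :=
  eq_zero_of_choose_smul_add_choose_smul (by omega)
    (choose_smul_add_choose_smul_eq_zero h (j := 0) (by omega))
    (choose_smul_add_choose_smul_eq_zero h (j := 1) (by omega))

end VectorValued

theorem ConfDerEq.affinePowSum_eq {V : Type*} [AddCommGroup V] [Module ℂ V]
    {circ br : V →ₗ[ℂ] V →ₗ[ℂ] V} {n : ℕ} {d : ℕ → V →ₗ[ℂ] (ℂ → V)}
    (hE : ConfDerEq circ br n d) (a b : V) (l μ t : ℂ) :
    affinePowSum 0 1 (fun i => l • d i (circ b a) l + d i (br b a) l)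
        (fun i => (1 + μ) • d i (circ b a) l + μ • d i (circ a b) l) n t
      = affinePowSum (-l) (-μ)
          (fun i => l • (circ (d i a l) b + circ b (d i a l)) + br b (d i a l))
          (fun i => circ b (d i a l) + μ • (circ (d i a l) b + circ b (d i a l))) n t
        + affinePowSum 0 (μ + 1) (fun i => br (d i b l) a)
          (fun i => circ (d i b l) a + μ • (circ (d i b l) a + circ a (d i b l))) n t := by
  convert hE a b l (μ * t) t using 1
  · simp only [affinePowSum, smul_sum, ← sum_add_distrib, map_add, Pi.add_apply]
    exact sum_congr rfl fun i _ => by module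
  · congr 1 <;> exact sum_congr rfl fun i _ => by module

theorem stmt_9_general {V : Type*} [AddCommGroup V] [Module ℂ V]
    (circ br : V →ₗ[ℂ] V →ₗ[ℂ] V)
    (n : ℕ) (hn : 3 < n)
    (d : ℕ → V →ₗ[ℂ] (ℂ → V))
    (hE : ConfDerEq circ br n d) :
    ∀ (a b : V) (l : ℂ), circ (d n b l) a = 0 ∧ circ a (d n b l) = 0 := by
  intro a b l
  set D := d n a l
  set E := d n b l
  have htop : ∀ μ : ℂ, d n (circ b a) l + μ • (d n (circ b a) l + d n (circ a b) l)
      = μ ^ n • ((-1 : ℂ) ^ n • circ b D + μ • ((-1 : ℂ) ^ n • (circ D b + circ b D)))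
        + (μ + 1) ^ n • (circ E a + μ • (circ E a + circ a E)) := fun μ => by
    have := top_smul_eq_of_affinePowSum_eq (hE.affinePowSum_eq a b l μ)
    rw [one_pow, one_smul, neg_pow μ] at this
    linear_combination (norm := module) this
  obtain ⟨hEa, hsum⟩ := eq_zero_of_forall_add_smul_eq hn htop
  exact ⟨hEa, by simpa [hEa] using hsum⟩

/-- Let `V` be a Gel'fand–Dorfman bialgebra over `ℂ`, `n > 3`, and
`d^0, …, d^n` linear maps from `V` into the space of polynomial maps `ℂ → V`
satisfying the conformal derivation equation (E).  Then `d^n_λ(b)∘a = 0` and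
`a∘d^n_λ(b) = 0` for all `a, b ∈ V` and all `λ ∈ ℂ`. -/
theorem stmt_9 {V : Type*} [AddCommGroup V] [Module ℂ V]
    (circ br : V →ₗ[ℂ] V →ₗ[ℂ] V)
    -- Novikov algebra axioms for `∘ = circ`
    (hNov1 : ∀ a b c : V, circ (circ a b) c - circ a (circ b c)
      = circ (circ b a) c - circ b (circ a c))
    (hNov2 : ∀ a b c : V, circ (circ a b) c = circ (circ a c) b)
    -- Lie algebra axioms for `[·,·] = br`
    (hSkew : ∀ a b : V, br a b = - br b a)
    (hJacobi : ∀ a b c : V, br (br a b) c + br (br b c) a + br (br c a) b = 0)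
    -- compatibility condition of the Gel'fand–Dorfman bialgebra
    (hCompat : ∀ a b c : V, br (circ a b) c - br (circ a c) b + circ (br a b) c
      - circ (br a c) b - circ a (br b c) = 0)
    (n : ℕ) (hn : 3 < n)
    (d : ℕ → V →ₗ[ℂ] (ℂ → V))
    -- the family consists only of `d^0, …, d^n`
    (hd : ∀ i : ℕ, n < i → d i = 0)
    -- each `d^i(a)` is a polynomial map `ℂ → V`
    (hpoly : ∀ (i : ℕ) (a : V), ∃ (N : ℕ) (v : ℕ → V),
      ∀ t : ℂ, d i a t = ∑ j ∈ Finset.range N, t ^ j • v j)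
    (hE : ConfDerEq circ br n d) :
    ∀ (a b : V) (l : ℂ), circ (d n b l) a = 0 ∧ circ a (d n b l) = 0 :=
  stmt_9_general circ br n hn d hE
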